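/- (Theorem 1, continuous deviation bound.) Let ℓ > 0, A_max > 0, V_max = √(ℓ·A_max), h = 2·√(ℓ/A_max). Let K ≥ 1 and let ϖ : {0, …, K} → ℝ^d satisfy hypotheses (a), (b), (c): (a) for every k < K, either ϖ(k+1) = ϖ(k) or ϖ(k+1) = ϖ(k) + ℓ·σ·e_i for some coordinate index i and sign σ ∈ {−1, +1}; (b) for 0 < k < K, if ϖ(k) ≠ ϖ(k−1) and ϖ(k+1) ≠ ϖ(k) then ϖ(k+1) − ϖ(k) = ϖ(k) − ϖ(k−1); (c) if ϖ(k+1) = ϖ(k) for some k < K then k + 1 < K, ϖ(k+2) ≠ ϖ(k+1), and if k > 0 then ϖ(k) ≠ ϖ(k−1). Then there exist sequences p, v, a : {0, …, K} → ℝ^d with p(0) = ϖ(0), v(0) = 0, satisfying p(k+1) = p(k) + h·v(k) + (h²/2)·a(k), v(k+1) = v(k) + h·a(k), ‖p(k) − ϖ(k)‖_∞ ≤ ℓ, ‖v(k)‖_∞ ≤ V_max, ‖a(k)‖_∞ ≤ A_max for all k, and such that moreover for every k < K and every t ∈ [0, h], there is a point q on the closed segment joining ϖ(k) and ϖ(k+1)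 with ‖(p(k) + t·v(k) + (t²/2)·a(k)) − q‖₂ ≤ (3/2)·ℓ·√d. -/

import Mathlib

/-!
Let `δ k = ϖ (k + 1) - ϖ k` (with `δ (-1) = 0`, and `δ k = 0` for `k ≥ K`). Place `p k` at the
midpoint `ϖ k - δ (k - 1) / 2`, moving with velocity `δ (k - 1) / h`; the constant acceleration
`(δ k - δ (k - 1)) / h²` turns this velocity into `δ k / h` over one step and lands exactly on the
next midpoint. At time `t = u h` the trajectory differs from the point of `[ϖ k, ϖ (k + 1)]` at
parameter `u` by `-((1 - u)² / 2) δ (k - 1) + (u² / 2 - u) δ k`, whose coefficients have absolute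
values summing to `1 / 2`; every coordinate of `δ` is at most `ℓ` in absolute value, so the
deviation is at most `ℓ / 2` per coordinate.
-/

open Real

lemma EuclideanSpace.norm_le_mul_sqrt_card {ι : Type*} [Fintype ι] {x : EuclideanSpace ℝ ι}
    {c : ℝ} (hc : 0 ≤ c) (hx : ∀ j, |x j| ≤ c) : ‖x‖ ≤ c * √(Fintype.card ι) := by
  rw [EuclideanSpace.norm_eq]
  calc √(∑ j, ‖x j‖ ^ 2) ≤ √(∑ _j : ι, c ^ 2) := by
        gcongr with j
        exact (norm_eq_abs _).trans_le (hx j)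
    _ = c * √(Fintype.card ι) := by
        rw [Finset.sum_const, Finset.card_univ, nsmul_eq_mul, sqrt_mul (Nat.cast_nonneg _),
          sqrt_sq hc, mul_comm]

lemma EuclideanSpace.abs_sub_apply_le_of_eq_or_eq_add_single {ι : Type*} [DecidableEq ι]
    {x y : EuclideanSpace ℝ ι} {ℓ : ℝ} (hℓ : 0 ≤ ℓ)
    (hxy : y = x ∨ ∃ (i : ι) (σ : ℝ), (σ = 1 ∨ σ = -1) ∧
      y = x + (ℓ * σ) • EuclideanSpace.single i (1 : ℝ)) (j : ι) :
    |(y - x) j| ≤ ℓ := by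
  rcases hxy with rfl | ⟨i, σ, hσ, rfl⟩
  · simpa using hℓ
  · rw [add_sub_cancel_left, PiLp.smul_apply, PiLp.single_apply, smul_eq_mul]
    split_ifs <;> rcases hσ with rfl | rfl <;> simp [abs_of_nonneg hℓ, hℓ]

section Trajectory

variable {E : Type*} [AddCommGroup E] (K : ℕ) (ϖ : ℕ → E)

def truncIncrement (k : ℕ) : E := if k < K then ϖ (k + 1) - ϖ k else 0

def prevIncrement : ℕ → E
  | 0 => 0
  | k + 1 => truncIncrement K ϖ k

lemma truncIncrement_of_lt {K : ℕ} {ϖ : ℕ → E} {k : ℕ} (hk : k < K) :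
    truncIncrement K ϖ k = ϖ (k + 1) - ϖ k :=
  if_pos hk

variable [Module ℝ E]

noncomputable def midpointPos (k : ℕ) : E := ϖ k - (2⁻¹ : ℝ) • prevIncrement K ϖ k

variable (h : ℝ)

noncomputable def stepVel (k : ℕ) : E := h⁻¹ • prevIncrement K ϖ k

noncomputable def stepAcc (k : ℕ) : E := (h ^ 2)⁻¹ • (truncIncrement K ϖ k - prevIncrement K ϖ k)

variable {K ϖ h}

lemma midpointPos_succ (hh : h ≠ 0) {k : ℕ} (hk : k < K) :
    midpointPos K ϖ (k + 1) =
      midpointPos K ϖ k + h • stepVel K ϖ h k + (h ^ 2 / 2) • stepAcc K ϖ h k := by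
  simp only [midpointPos, stepVel, stepAcc, prevIncrement]
  rw [truncIncrement_of_lt hk]
  match_scalars <;> field_simp <;> ring

lemma stepVel_succ (hh : h ≠ 0) (k : ℕ) :
    stepVel K ϖ h (k + 1) = stepVel K ϖ h k + h • stepAcc K ϖ h k := by
  simp only [stepVel, stepAcc, prevIncrement]
  match_scalars <;> field_simp
  ring

lemma midpointPos_add_sub_lineMap (hh : h ≠ 0) {k : ℕ} (hk : k < K) (u : ℝ) :
    midpointPos K ϖ k + (u * h) • stepVel K ϖ h k + ((u * h) ^ 2 / 2) • stepAcc K ϖ h k -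
        AffineMap.lineMap (ϖ k) (ϖ (k + 1)) u =
      (-((1 - u) ^ 2 / 2)) • prevIncrement K ϖ k + (u ^ 2 / 2 - u) • truncIncrement K ϖ k := by
  simp only [midpointPos, stepVel, stepAcc, AffineMap.lineMap_apply_module]
  rw [truncIncrement_of_lt hk]
  match_scalars <;> field_simp <;> ring

end Trajectory

section CoordinateBounds

variable {ι : Type*} {K : ℕ} {ϖ : ℕ → EuclideanSpace ℝ ι} {ℓ h : ℝ}

lemma abs_truncIncrement_apply_le (hℓ : 0 ≤ ℓ) (hϖ : ∀ k < K, ∀ j, |(ϖ (k + 1) - ϖ k) j| ≤ ℓ)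
    (k : ℕ) (j : ι) : |truncIncrement K ϖ k j| ≤ ℓ := by
  unfold truncIncrement
  split_ifs with hk
  · exact hϖ k hk j
  · simpa using hℓ

lemma abs_prevIncrement_apply_le (hℓ : 0 ≤ ℓ) (hϖ : ∀ k < K, ∀ j, |(ϖ (k + 1) - ϖ k) j| ≤ ℓ)
    (k : ℕ) (j : ι) : |prevIncrement K ϖ k j| ≤ ℓ := by
  cases k with
  | zero => simpa [prevIncrement] using hℓ
  | succ k => exact abs_truncIncrement_apply_le hℓ hϖ k j

lemma abs_midpointPos_sub_apply_le (hℓ : 0 ≤ ℓ)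
    (hϖ : ∀ k < K, ∀ j, |(ϖ (k + 1) - ϖ k) j| ≤ ℓ) (k : ℕ) (j : ι) :
    |(midpointPos K ϖ k - ϖ k) j| ≤ ℓ / 2 := by
  have := abs_prevIncrement_apply_le hℓ hϖ k j
  simp only [midpointPos, sub_sub_cancel_left, PiLp.neg_apply, PiLp.smul_apply, smul_eq_mul,
    abs_neg, abs_mul]
  norm_num
  linarith

lemma abs_stepVel_apply_le (hℓ : 0 ≤ ℓ) (hh : 0 < h)
    (hϖ : ∀ k < K, ∀ j, |(ϖ (k + 1) - ϖ k) j| ≤ ℓ) (k : ℕ) (j : ι) :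
    |stepVel K ϖ h k j| ≤ ℓ / h := by
  rw [stepVel, PiLp.smul_apply, smul_eq_mul, abs_mul, abs_inv, abs_of_pos hh, inv_mul_eq_div]
  gcongr
  exact abs_prevIncrement_apply_le hℓ hϖ k j

lemma abs_stepAcc_apply_le (hℓ : 0 ≤ ℓ) (hh : 0 < h)
    (hϖ : ∀ k < K, ∀ j, |(ϖ (k + 1) - ϖ k) j| ≤ ℓ) (k : ℕ) (j : ι) :
    |stepAcc K ϖ h k j| ≤ 2 * ℓ / h ^ 2 := by
  rw [stepAcc, PiLp.smul_apply, smul_eq_mul, abs_mul, abs_inv, abs_of_pos (by positivity),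
    inv_mul_eq_div, PiLp.sub_apply]
  gcongr
  calc _ ≤ |truncIncrement K ϖ k j| + |prevIncrement K ϖ k j| := abs_sub _ _
    _ ≤ ℓ + ℓ := add_le_add (abs_truncIncrement_apply_le hℓ hϖ k j)
        (abs_prevIncrement_apply_le hℓ hϖ k j)
    _ = 2 * ℓ := by ring

lemma exists_mem_segment_norm_sub_le [Fintype ι] (hℓ : 0 ≤ ℓ) (hh : 0 < h)
    (hϖ : ∀ k < K, ∀ j, |(ϖ (k + 1) - ϖ k) j| ≤ ℓ) {k : ℕ} (hk : k < K) {t : ℝ}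
    (ht : t ∈ Set.Icc 0 h) :
    ∃ q ∈ segment ℝ (ϖ k) (ϖ (k + 1)),
      ‖midpointPos K ϖ k + t • stepVel K ϖ h k + (t ^ 2 / 2) • stepAcc K ϖ h k - q‖ ≤
        ℓ / 2 * √(Fintype.card ι) := by
  set u := t / h
  have hu : u ∈ Set.Icc (0 : ℝ) 1 := ⟨div_nonneg ht.1 hh.le, (div_le_one hh).mpr ht.2⟩
  have ht : t = u * h := (div_mul_cancel₀ t hh.ne').symm
  refine ⟨_, segment_eq_image_lineMap ℝ (ϖ k) (ϖ (k + 1)) ▸ Set.mem_image_of_mem _ hu, ?_⟩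
  rw [ht, midpointPos_add_sub_lineMap hh.ne' hk]
  refine EuclideanSpace.norm_le_mul_sqrt_card (by positivity) fun j => ?_
  have hδ := abs_truncIncrement_apply_le hℓ hϖ k j
  have hδ' := abs_prevIncrement_apply_le hℓ hϖ k j
  have hu' : u ^ 2 / 2 - u ≤ 0 := by nlinarith [hu.1, hu.2]
  rw [PiLp.add_apply, PiLp.smul_apply, PiLp.smul_apply, smul_eq_mul, smul_eq_mul]
  calc _ ≤ |-((1 - u) ^ 2 / 2)| * |prevIncrement K ϖ k j| + |u ^ 2 / 2 - u| * |truncIncrement K ϖ k j| :=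
        (abs_add_le _ _).trans_eq (by rw [abs_mul, abs_mul])
    _ ≤ (1 - u) ^ 2 / 2 * ℓ + -(u ^ 2 / 2 - u) * ℓ := by
        rw [abs_neg, abs_of_nonneg (by positivity), abs_of_nonpos hu']
        gcongr
        linarith
    _ = ℓ / 2 := by ring

end CoordinateBounds

theorem stmt_9_general (d : ℕ) (ℓ Amax Vmax h : ℝ) (hℓ : 0 < ℓ) (hA : 0 < Amax)
    (hV : Vmax = Real.sqrt (ℓ * Amax)) (hh : h = 2 * Real.sqrt (ℓ / Amax))
    (K : ℕ) (ϖ : ℕ → EuclideanSpace ℝ (Fin d))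
    -- (a): each step is either a repeat or an ℓ-step along a signed coordinate direction
    (hstep : ∀ k < K, ϖ (k + 1) = ϖ k ∨
      ∃ (i : Fin d) (σ : ℝ), (σ = 1 ∨ σ = -1) ∧
        ϖ (k + 1) = ϖ k + (ℓ * σ) • EuclideanSpace.single i (1 : ℝ)) :
    ∃ p v a : ℕ → EuclideanSpace ℝ (Fin d),
      p 0 = ϖ 0 ∧ v 0 = 0 ∧
      (∀ k < K, p (k + 1) = p k + h • v k + (h ^ 2 / 2) • a k ∧
                v (k + 1) = v k + h • a k) ∧
      (∀ k ≤ K, (∀ j, |(p k - ϖ k) j| ≤ ℓ) ∧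
                (∀ j, |v k j| ≤ Vmax) ∧
                (∀ j, |a k j| ≤ Amax)) ∧
      (∀ k < K, ∀ t ∈ Set.Icc (0 : ℝ) h,
        ∃ q ∈ segment ℝ (ϖ k) (ϖ (k + 1)),
          ‖(p k + t • v k + (t ^ 2 / 2) • a k) - q‖ ≤ 3 / 2 * ℓ * Real.sqrt d) := by
  have hh₀ : 0 < h := by rw [hh]; positivity
  have hhV : h * Vmax = 2 * ℓ := by
    rw [hh, hV, mul_assoc, ← sqrt_mul (div_pos hℓ hA).le,
      show ℓ / Amax * (ℓ * Amax) = ℓ * ℓ by field_simp, sqrt_mul_self hℓ.le]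
  have hhA : h ^ 2 * Amax = 4 * ℓ := by
    rw [hh, mul_pow, sq_sqrt (div_pos hℓ hA).le, mul_assoc, div_mul_cancel₀ ℓ hA.ne']
    norm_num
  have hϖ : ∀ k < K, ∀ j, |(ϖ (k + 1) - ϖ k) j| ≤ ℓ := fun k hk =>
    EuclideanSpace.abs_sub_apply_le_of_eq_or_eq_add_single hℓ.le (hstep k hk)
  refine ⟨midpointPos K ϖ, stepVel K ϖ h, stepAcc K ϖ h, by simp [midpointPos, prevIncrement],
    by simp [stepVel, prevIncrement],
    fun k hk => ⟨midpointPos_succ hh₀.ne' hk, stepVel_succ hh₀.ne' k⟩,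
    fun k _ => ⟨fun j => ?_, fun j => ?_, fun j => ?_⟩, fun k hk t ht => ?_⟩
  · linarith [abs_midpointPos_sub_apply_le hℓ.le hϖ k j]
  · refine (abs_stepVel_apply_le hℓ.le hh₀ hϖ k j).trans ?_
    rw [div_le_iff₀ hh₀]
    nlinarith
  · refine (abs_stepAcc_apply_le hℓ.le hh₀ hϖ k j).trans ?_
    rw [div_le_iff₀ (by positivity)]
    linarith
  · obtain ⟨q, hq, hdev⟩ := exists_mem_segment_norm_sub_le hℓ.le hh₀ hϖ hk ht
    refine ⟨q, hq, hdev.trans ?_⟩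
    rw [Fintype.card_fin]
    gcongr
    linarith

/-- Theorem 1, continuous deviation bound: the piecewise
constant-acceleration trajectory interpolating the discrete states stays
within Euclidean distance (3/2)·ℓ·√d of the polyline through the waypoints. -/
theorem stmt_9 (d : ℕ) (hd : 1 ≤ d) (ℓ Amax Vmax h : ℝ) (hℓ : 0 < ℓ) (hA : 0 < Amax)
    (hV : Vmax = Real.sqrt (ℓ * Amax)) (hh : h = 2 * Real.sqrt (ℓ / Amax))
    (K : ℕ) (hK : 1 ≤ K) (ϖ : ℕ → EuclideanSpace ℝ (Fin d))
    -- (a): each step is either a repeat or an ℓ-step along a signed coordinate direction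
    (hstep : ∀ k < K, ϖ (k + 1) = ϖ k ∨
      ∃ (i : Fin d) (σ : ℝ), (σ = 1 ∨ σ = -1) ∧
        ϖ (k + 1) = ϖ k + (ℓ * σ) • EuclideanSpace.single i (1 : ℝ))
    -- (b): the moving direction can change only across a repeated waypoint
    (hdir : ∀ m, m + 1 < K → ϖ (m + 1) ≠ ϖ m → ϖ (m + 2) ≠ ϖ (m + 1) →
      ϖ (m + 2) - ϖ (m + 1) = ϖ (m + 1) - ϖ m)
    -- (c): every repeated waypoint is isolated and not terminal
    (hrep : ∀ k < K, ϖ (k + 1) = ϖ k →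
      k + 1 < K ∧ ϖ (k + 2) ≠ ϖ (k + 1) ∧ (0 < k → ϖ k ≠ ϖ (k - 1))) :
    ∃ p v a : ℕ → EuclideanSpace ℝ (Fin d),
      p 0 = ϖ 0 ∧ v 0 = 0 ∧
      (∀ k < K, p (k + 1) = p k + h • v k + (h ^ 2 / 2) • a k ∧
                v (k + 1) = v k + h • a k) ∧
      (∀ k ≤ K, (∀ j, |(p k - ϖ k) j| ≤ ℓ) ∧
                (∀ j, |v k j| ≤ Vmax) ∧
                (∀ j, |a k j| ≤ Amax)) ∧
      (∀ k < K, ∀ t ∈ Set.Icc (0 : ℝ) h,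
        ∃ q ∈ segment ℝ (ϖ k) (ϖ (k + 1)),
          ‖(p k + t • v k + (t ^ 2 / 2) • a k) - q‖ ≤ 3 / 2 * ℓ * Real.sqrt d) :=
  stmt_9_general d ℓ Amax Vmax h hℓ hA hV hh K ϖ hstep
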